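/- Let α ≥ 1 be a countable ordinal, let X = ω^α + 1 (realized as Iic(ω^α) with the subspace topology from the order topology on ordinals), and let f : X → X be continuous such that some w ∈ X has dense orbit. Let d denote the top point of X, i.e., the element ω^α. Then f(d) = d. -/

import Mathlib

open Ordinal Topology Filter Set

section Generic

variable {X : Type*} [TopologicalSpace X]

noncomputable def cbIter (S : Set X) (β : Ordinal) : Set X :=
  S ∩ ⋂ γ : {γ : Ordinal // γ < β}, derivedSet (cbIter S γ.1)
termination_by β
decreasing_by exact γ.2

theorem mem_cbIter {S : Set X} {β : Ordinal} {x : X} :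
    x ∈ cbIter S β ↔ x ∈ S ∧ ∀ γ < β, x ∈ derivedSet (cbIter S γ) := by
  rw [cbIter]
  simp only [Set.mem_inter_iff, Set.mem_iInter, Subtype.forall]

theorem cbIter_subset_self {S : Set X} {β : Ordinal} : cbIter S β ⊆ S :=
  fun _ hx => (mem_cbIter.1 hx).1

theorem cbIter_anti {S : Set X} {β β' : Ordinal} (h : β ≤ β') :
    cbIter S β' ⊆ cbIter S β := by
  intro x hx
  rw [mem_cbIter] at hx ⊢
  exact ⟨hx.1, fun γ hγ => hx.2 γ (hγ.trans_le h)⟩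

theorem cbIter_mono {S S' : Set X} (h : S ⊆ S') (β : Ordinal) :
    cbIter S β ⊆ cbIter S' β := by
  induction β using Ordinal.induction with
  | h β IH =>
    intro x hx
    rw [mem_cbIter] at hx ⊢
    exact ⟨h hx.1, fun γ hγ => derivedSet_mono _ _ (IH γ hγ) (hx.2 γ hγ)⟩

theorem isClosed_cbIter [T1Space X] {S : Set X} (hS : IsClosed S) (β : Ordinal) :
    IsClosed (cbIter S β) := by
  rw [cbIter]
  exact hS.inter (isClosed_iInter fun γ => isClosed_derivedSet _)

theorem derivedSet_finite_eq_empty [T1Space X] {A : Set X} (hA : A.Finite) :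
    derivedSet A = ∅ := by
  ext x
  simp only [Set.mem_empty_iff_false, iff_false]
  intro hx
  rw [mem_derivedSet, accPt_iff_nhds] at hx
  obtain ⟨y, ⟨hyU, hyA⟩, hyx⟩ := hx ((A \ {x})ᶜ)
    (((hA.subset diff_subset).isClosed).isOpen_compl.mem_nhds (by simp))
  exact hyU ⟨hyA, hyx⟩

/-- If `x` is an accumulation point of `f '' K` with `K` compact, then `x = f k` for some
accumulation point `k` of `K` inside `K`. -/
theorem exists_accPt_preimage [T2Space X] {f : X → X} (hf : Continuous f) {K : Set X}
    (hK : IsCompact K) {x : X} (hx : x ∈ derivedSet (f '' K)) :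
    ∃ k, k ∈ K ∧ k ∈ derivedSet K ∧ f k = x := by
  by_contra hcon
  push_neg at hcon
  set F := K ∩ f ⁻¹' {x} with hF
  have hFc : IsCompact F := hK.inter_right (isClosed_singleton.preimage hf)
  have hU : ∀ k : F, ∃ U : Set X, IsOpen U ∧ k.1 ∈ U ∧ U ∩ K ⊆ {k.1} := by
    rintro ⟨k, hkK, hkx⟩
    have hknacc : ¬ AccPt k (𝓟 K) := fun h => hcon k hkK h hkx
    rw [accPt_iff_nhds] at hknacc
    push_neg at hknacc
    obtain ⟨U, hU, h⟩ := hknacc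
    obtain ⟨V, hVU, hVo, hkV⟩ := mem_nhds_iff.1 hU
    exact ⟨V, hVo, hkV, fun y ⟨hyV, hyK⟩ => h y ⟨hVU hyV, hyK⟩⟩
  choose U hUo hkU hUK using hU
  obtain ⟨t, ht⟩ := hFc.elim_finite_subcover U hUo
    (fun y hy => mem_iUnion.2 ⟨⟨y, hy⟩, hkU _⟩)
  set G : Set X := ⋃ k ∈ t, U k with hG
  have hGo : IsOpen G := isOpen_biUnion fun k _ => hUo k
  have hGKfin : (G ∩ K).Finite := by
    have : G ∩ K ⊆ (fun k : F => k.1) '' t := by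
      rintro y ⟨hyG, hyK⟩
      obtain ⟨k, hkt, hyU⟩ := mem_iUnion₂.1 hyG
      have : y ∈ ({k.1} : Set X) := hUK k ⟨hyU, hyK⟩
      exact ⟨k, hkt, this.symm⟩
    exact Set.Finite.subset (t.finite_toSet.image _) this
  have hK2 : IsCompact (K \ G) := hK.diff hGo
  have hxK2 : x ∉ f '' (K \ G) := by
    rintro ⟨k, ⟨hkK, hkG⟩, rfl⟩
    exact hkG (ht ⟨hkK, rfl⟩)
  have hsplit : f '' K ⊆ f '' (K \ G) ∪ f '' (G ∩ K) := by
    rintro y ⟨k, hk, rfl⟩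
    by_cases hkG : k ∈ G
    · exact Or.inr ⟨k, ⟨hkG, hk⟩, rfl⟩
    · exact Or.inl ⟨k, ⟨hk, hkG⟩, rfl⟩
  have := derivedSet_mono _ _ hsplit hx
  rw [derivedSet_union] at this
  rcases this with h | h
  · exact hxK2 ((hK2.image hf).isClosed.closure_subset (derivedSet_subset_closure _ h))
  · rw [derivedSet_finite_eq_empty (hGKfin.image f)] at h
    exact h

theorem cbIter_image_subset [T2Space X] [CompactSpace X] {f : X → X} (hf : Continuous f)
    {K : Set X} (hK : IsClosed K) (β : Ordinal) :
    cbIter (f '' K) β ⊆ f '' cbIter K β := by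
  induction β using Ordinal.induction with
  | h β IH =>
    intro x hx
    rw [mem_cbIter] at hx
    rcases eq_or_ne β 0 with rfl | hβ0
    · obtain ⟨k, hk, rfl⟩ := hx.1
      exact ⟨k, mem_cbIter.2 ⟨hk, fun γ hγ => absurd hγ (not_lt_zero' (a := γ))⟩, rfl⟩
    · have : Nonempty {γ : Ordinal // γ < β} := ⟨⟨0, pos_iff_ne_zero.2 hβ0⟩⟩
      set Fam : {γ : Ordinal // γ < β} → Set X :=
        fun γ => K ∩ f ⁻¹' {x} ∩ derivedSet (cbIter K γ.1) with hFam
      have hclosed : ∀ γ, IsClosed (Fam γ) := fun γ =>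
        ((hK.inter (isClosed_singleton.preimage hf)).inter (isClosed_derivedSet _))
      have hcpt : ∀ γ, IsCompact (Fam γ) := fun γ => (hclosed γ).isCompact
      have hne : ∀ γ, (Fam γ).Nonempty := by
        intro γ
        have h1 : x ∈ derivedSet (f '' cbIter K γ.1) :=
          derivedSet_mono _ _ (IH γ.1 γ.2) (hx.2 γ.1 γ.2)
        obtain ⟨k, hk1, hk2, hk3⟩ := exists_accPt_preimage hf
          (isClosed_cbIter hK γ.1).isCompact h1
        exact ⟨k, ⟨⟨cbIter_subset_self hk1, hk3⟩, hk2⟩⟩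
      have hdir : Directed (· ⊇ ·) Fam := by
        intro γ δ
        rcases le_total γ.1 δ.1 with h | h
        · exact ⟨δ, fun y hy => ⟨hy.1,
            derivedSet_mono _ _ (cbIter_anti h) hy.2⟩, fun y hy => hy⟩
        · exact ⟨γ, fun y hy => hy, fun y hy => ⟨hy.1,
            derivedSet_mono _ _ (cbIter_anti h) hy.2⟩⟩
      obtain ⟨k, hk⟩ := IsCompact.nonempty_iInter_of_directed_nonempty_isCompact_isClosed
        Fam hdir hne hcpt hclosed
      simp only [Set.mem_iInter, hFam, Set.mem_inter_iff, Set.mem_preimage,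
        Set.mem_singleton_iff, Subtype.forall] at hk
      have hkK : k ∈ K := (hk 0 (pos_iff_ne_zero.2 hβ0)).1.1
      have hkx : f k = x := (hk 0 (pos_iff_ne_zero.2 hβ0)).1.2
      exact ⟨k, mem_cbIter.2 ⟨hkK, fun γ hγ => (hk γ hγ).2⟩, hkx⟩

end Generic
section OrdinalSpace

instance compactSpace_Iic (o : Ordinal) : CompactSpace (Set.Iic o) := by
  rw [← isCompact_iff_compactSpace]
  have : (Set.Iic o) = Set.Icc ⊥ o := (Set.Icc_bot).symm
  rw [this]
  exact isCompact_Icc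

/-- From a neighborhood of a limit point `x` in `Iic o`, extract a lower bound `a`. -/
theorem exists_lb_of_nhds {o : Ordinal} {x : Set.Iic o} {U : Set (Set.Iic o)}
    (hU : U ∈ 𝓝 x) (hx : Order.IsSuccLimit x.1) :
    ∃ a < x.1, ∀ s : Set.Iic o, a < s.1 → s.1 < x.1 → s ∈ U := by
  rw [nhds_subtype] at hU
  obtain ⟨W, hW, hWU⟩ := hU
  obtain ⟨V, hVW, hVo, hxV⟩ := mem_nhds_iff.1 hW
  obtain ⟨a, ha, hIoo⟩ := (Ordinal.isOpen_iff).1 hVo x.1 hxV hx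
  exact ⟨a, ha, fun s h1 h2 => hWU (hVW (hIoo ⟨h1, h2⟩))⟩

theorem accPt_of_cofinal {o : Ordinal} {S : Set (Set.Iic o)} {x : Set.Iic o}
    (h0 : 0 < x.1) (h : ∀ a < x.1, ∃ s ∈ S, a < s.1 ∧ s.1 < x.1) :
    AccPt x (𝓟 S) := by
  have hlim : Order.IsSuccLimit x.1 := by
    rcases Ordinal.zero_or_succ_or_isSuccLimit x.1 with h' | ⟨a, ha⟩ | h'
    · exact absurd h' h0.ne'
    · obtain ⟨s, _, h1, h2⟩ := h a (ha ▸ Order.lt_succ a)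
      rw [← ha, Order.lt_succ_iff] at h2
      exact absurd h1 h2.not_gt
    · exact h'
  rw [accPt_iff_nhds]
  intro U hU
  obtain ⟨a, ha, hsub⟩ := exists_lb_of_nhds hU hlim
  obtain ⟨s, hsS, h1, h2⟩ := h a ha
  exact ⟨s, ⟨hsub s h1 h2, hsS⟩, fun hsx => absurd (congrArg Subtype.val hsx) h2.ne⟩

theorem dvd_of_dvd_add {d a b : Ordinal} (h1 : d ∣ a) (h2 : d ∣ a + b) : d ∣ b := by
  rcases eq_or_ne d 0 with rfl | hd
  · rw [zero_dvd_iff] at h1 h2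
    rw [h1, zero_add] at h2
    simp [h2]
  · obtain ⟨u, rfl⟩ := h1
    obtain ⟨v, hv⟩ := h2
    have huv : u ≤ v := by
      rw [← mul_le_mul_iff_right₀ (pos_iff_ne_zero.2 hd), ← hv]
      exact le_self_add
    refine ⟨v - u, ?_⟩
    have : d * u + d * (v - u) = d * u + b := by
      rw [← mul_add, Ordinal.add_sub_cancel_of_le huv, ← hv]
    exact (add_left_cancel_iff.1 this).symm

/-- Accumulation points of multiples of `ω ^ γ` are multiples of `ω ^ (γ + 1)`. -/
theorem dvd_succ_of_accPt {o γ : Ordinal} {x : Set.Iic o}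
    (hx : x ∈ derivedSet {v : Set.Iic o | omega0 ^ γ ∣ v.1}) :
    omega0 ^ (γ + 1) ∣ x.1 := by
  have hωγ : (0:Ordinal) < omega0 ^ γ := opow_pos γ omega0_pos
  have hωγ1 : (0:Ordinal) < omega0 ^ (γ + 1) := opow_pos _ omega0_pos
  rw [mem_derivedSet, accPt_iff_nhds] at hx
  -- x ≠ 0
  have hx0 : 0 < x.1 := by
    by_contra h0
    push_neg at h0
    obtain ⟨y, ⟨hyU, _⟩, hyx⟩ := hx (Subtype.val ⁻¹' Set.Iio 1)
      (((isOpen_Iio).preimage continuous_subtype_val).mem_nhds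
        (by simpa using lt_of_le_of_lt h0 zero_lt_one))
    refine hyx (Subtype.ext ?_)
    have hy : y.1 < 1 := hyU
    have hx' : x.1 = 0 := le_antisymm h0 zero_le
    rw [hx', Ordinal.lt_one_iff_zero.1 hy]
  -- cofinal multiples below x
  have hcof : ∀ a < x.1, ∃ s : Ordinal, omega0 ^ γ ∣ s ∧ a < s ∧ s < x.1 := by
    intro a ha
    obtain ⟨y, ⟨hyU, hyM⟩, hyx⟩ := hx (Subtype.val ⁻¹' Set.Ioo a (x.1 + 1))
      (((isOpen_Ioo).preimage continuous_subtype_val).mem_nhds ⟨ha, lt_add_one _⟩)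
    have h2 : y.1 ≤ x.1 := Order.lt_add_one_iff.1 hyU.2
    have h3 : y.1 < x.1 := h2.lt_of_ne (fun h => hyx (Subtype.ext h))
    exact ⟨y.1, hyM, hyU.1, h3⟩
  set q := x.1 / omega0 ^ (γ + 1) with hq
  set r := x.1 % omega0 ^ (γ + 1) with hr
  have hdm : omega0 ^ (γ + 1) * q + r = x.1 := Ordinal.div_add_mod _ _
  rcases eq_or_ne r 0 with hr0 | hr0
  · exact Ordinal.dvd_of_mod_eq_zero hr0
  exfalso
  have hrpos : 0 < r := pos_iff_ne_zero.2 hr0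
  have hb0dvd : omega0 ^ γ ∣ omega0 ^ (γ + 1) * q :=
    dvd_mul_of_dvd_left (opow_dvd_opow _ le_self_add) _
  have key : ∀ m : ℕ, omega0 ^ γ * m < r := by
    intro m
    induction m with
    | zero => simpa using hrpos
    | succ m IH =>
      have ham : omega0 ^ (γ + 1) * q + omega0 ^ γ * m < x.1 := by
        rw [← hdm]
        exact add_lt_add_right IH _
      obtain ⟨s, hsdvd, hs1, hs2⟩ := hcof _ ham
      have hb0s : omega0 ^ (γ + 1) * q ≤ s := le_trans le_self_add hs1.le
      set t := s - omega0 ^ (γ + 1) * q with ht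
      have hts : omega0 ^ (γ + 1) * q + t = s := Ordinal.add_sub_cancel_of_le hb0s
      have htdvd : omega0 ^ γ ∣ t := dvd_of_dvd_add hb0dvd (hts ▸ hsdvd)
      have htm : omega0 ^ γ * m < t := by
        rw [← add_lt_add_iff_left (omega0 ^ (γ + 1) * q), hts]
        exact hs1
      have htr : t < r := by
        rw [← add_lt_add_iff_left (omega0 ^ (γ + 1) * q), hts, hdm]
        exact hs2
      obtain ⟨u, hu⟩ := htdvd
      have hmu : (m : Ordinal) < u := (mul_lt_mul_iff_right₀ hωγ).1 (hu ▸ htm)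
      have : ((m : Ordinal) + 1) ≤ u := by
        rw [Ordinal.add_one_eq_succ, Order.succ_le_iff]
        exact hmu
      calc omega0 ^ γ * (↑(m + 1) : Ordinal) = omega0 ^ γ * ((m : Ordinal) + 1) := by
            push_cast; ring_nf
        _ ≤ omega0 ^ γ * u := (mul_le_mul_iff_right₀ hωγ).2 this
        _ = t := hu.symm
        _ < r := htr
  have : omega0 ^ (γ + 1) ≤ r := by
    rw [Ordinal.add_one_eq_succ, opow_succ]
    rw [Ordinal.mul_le_iff_of_isSuccLimit isSuccLimit_omega0]
    intro b hb
    obtain ⟨n, rfl⟩ := Ordinal.lt_omega0.1 hb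
    exact (key n).le
  exact absurd (Ordinal.mod_lt _ hωγ1.ne') (not_lt_of_ge this)

/-- multiples of `ω ^ γ` are cofinal below any nonzero multiple of `ω ^ (γ+1)`. -/
theorem exists_mult_between {γ b x : Ordinal} (hbx : b < x)
    (hdvd : omega0 ^ (γ + 1) ∣ x) : ∃ s, omega0 ^ γ ∣ s ∧ b < s ∧ s < x := by
  obtain ⟨u, hu⟩ := hdvd
  have hu0 : u ≠ 0 := by
    rintro rfl
    rw [mul_zero] at hu
    exact absurd hbx (by simp [hu])
  have hv : x = omega0 ^ γ * (omega0 * u) := by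
    rw [hu, Ordinal.add_one_eq_succ, opow_succ, mul_assoc]
  have hlim : Order.IsSuccLimit (omega0 * u) := by
    rcases Ordinal.zero_or_succ_or_isSuccLimit u with rfl | ⟨v, rfl⟩ | h
    · exact absurd rfl hu0
    · rw [mul_succ]
      exact isSuccLimit_add _ isSuccLimit_omega0
    · exact isSuccLimit_mul_right omega0_pos h
  have hb' : b < omega0 ^ γ * (omega0 * u) := hv ▸ hbx
  obtain ⟨k, hk, hbk⟩ := (Ordinal.lt_mul_iff_of_isSuccLimit hlim).1 hb'
  refine ⟨omega0 ^ γ * k, dvd_mul_right _ _, hbk, ?_⟩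
  rw [hv]
  exact (mul_lt_mul_iff_right₀ (opow_pos γ omega0_pos)).2 hk

end OrdinalSpace

theorem M_subset_cbIter (o z : Ordinal) (γ : Ordinal) :
    {v : Set.Iic o | z < v.1 ∧ v.1 < o ∧ omega0 ^ γ ∣ v.1} ⊆
      cbIter {v : Set.Iic o | z < v.1 ∧ v.1 < o} γ := by
  induction γ using Ordinal.induction with
  | h γ IH =>
    rintro x ⟨hz, ho, hdvd⟩
    rw [mem_cbIter]
    refine ⟨⟨hz, ho⟩, fun δ hδ => ?_⟩
    refine derivedSet_mono _ _ (IH δ hδ) ?_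
    rw [mem_derivedSet]
    apply accPt_of_cofinal (lt_of_le_of_lt (zero_le (a := z)) hz)
    intro a ha
    have hδdvd : omega0 ^ (δ + 1) ∣ x.1 := dvd_trans (opow_dvd_opow _ (by
      rw [Ordinal.add_one_eq_succ]; exact Order.succ_le_iff.2 hδ)) hdvd
    obtain ⟨s, hs1, hs2, hs3⟩ := exists_mult_between (b := max a z) (max_lt ha hz) hδdvd
    refine ⟨⟨s, hs3.le.trans x.2⟩, ⟨?_, ?_, hs1⟩, ?_, hs3⟩
    · exact (le_max_right a z).trans_lt hs2
    · exact hs3.trans ho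
    · exact (le_max_left a z).trans_lt hs2

theorem dvd_of_mem_cbIter {o : Ordinal} (S : Set (Set.Iic o)) (β : Ordinal) :
    ∀ x ∈ cbIter S β, omega0 ^ β ∣ x.1 := by
  induction β using Ordinal.induction with
  | h β IH =>
    intro x hx
    have key : ∀ γ < β, omega0 ^ (γ + 1) ∣ x.1 := by
      intro γ hγ
      apply dvd_succ_of_accPt
      exact derivedSet_mono _ _ (fun v hv => IH γ hγ v hv) ((mem_cbIter.1 hx).2 γ hγ)
    rcases Ordinal.zero_or_succ_or_isSuccLimit β with rfl | ⟨γ, rfl⟩ | hlim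
    · simp only [opow_zero]; exact one_dvd _
    · rw [← Ordinal.add_one_eq_succ]
      exact key γ (by rw [← Ordinal.add_one_eq_succ]; exact lt_add_one γ)
    · rcases eq_or_ne (x.1 % omega0 ^ β) 0 with h0 | h0
      · exact Ordinal.dvd_of_mod_eq_zero h0
      exfalso
      have hβ0 : omega0 ^ β ≠ 0 := (opow_pos β omega0_pos).ne'
      have hrlt : x.1 % omega0 ^ β < omega0 ^ β := Ordinal.mod_lt _ hβ0
      obtain ⟨γ, hγβ, hrγ⟩ := (Ordinal.lt_opow_of_isSuccLimit Ordinal.omega0_ne_zero hlim).1 hrlt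
      have h1 : omega0 ^ (γ + 1) ∣ x.1 := key γ hγβ
      have hsucclt : γ + 1 ≤ β := by
        rw [Ordinal.add_one_eq_succ]
        exact (hlim.succ_lt hγβ).le
      have h2 : omega0 ^ (γ + 1) ∣ omega0 ^ β * (x.1 / omega0 ^ β) :=
        dvd_mul_of_dvd_left (opow_dvd_opow _ hsucclt) _
      have h3 : omega0 ^ (γ + 1) ∣ x.1 % omega0 ^ β :=
        dvd_of_dvd_add h2 (by rw [Ordinal.div_add_mod]; exact h1)
      have h4 : omega0 ^ (γ + 1) ≤ x.1 % omega0 ^ β := Ordinal.le_of_dvd h0 h3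
      have h5 : x.1 % omega0 ^ β < omega0 ^ (γ + 1) :=
        hrγ.trans_le (opow_le_opow_right omega0_pos (le_self_add))
      exact absurd h4 h5.not_ge

open Ordinal in
/-- Lemma 3.2(ii): For a dynamical system on `ω^α + 1` (realized as `Iic (ω^α)` with
the order topology), `α ≥ 1` countable, with a dense orbit, the top point `d = ω^α`
is a fixed point of `f`. -/
theorem top_point_fixed (α : Ordinal) (hα : 1 ≤ α)
    (hcount : α.card ≤ Cardinal.aleph0)
    (f : Set.Iic (omega0 ^ α) → Set.Iic (omega0 ^ α)) (hf : Continuous f)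
    (w : Set.Iic (omega0 ^ α)) (hw : Dense (Set.range fun n : ℕ => f^[n] w)) :
    f ⟨omega0 ^ α, Set.mem_Iic.mpr le_rfl⟩ = ⟨omega0 ^ α, Set.mem_Iic.mpr le_rfl⟩ := by
  by_contra hne
  set d : Set.Iic (omega0 ^ α) := ⟨omega0 ^ α, Set.mem_Iic.mpr le_rfl⟩ with hd
  set y : Set.Iic (omega0 ^ α) := f d with hy
  have hyo : y.1 < omega0 ^ α := lt_of_le_of_ne y.2 (fun h => hne (Subtype.ext h))
  have hα0 : α ≠ 0 := by
    intro h
    rw [h] at hα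
    exact absurd hα (by norm_num)
  have holim : Order.IsSuccLimit (omega0 ^ α) := isSuccLimit_opow_left isSuccLimit_omega0 hα0
  have hαpos : (0:Ordinal) < α := pos_iff_ne_zero.2 hα0
  -- continuity at d
  have hfV : f ⁻¹' (Subtype.val ⁻¹' Set.Iio (y.1 + 1)) ∈ 𝓝 d :=
    hf.continuousAt.preimage_mem_nhds
      ((isOpen_Iio.preimage continuous_subtype_val).mem_nhds
        (by simp only [Set.mem_preimage, Set.mem_Iio, ← hy]; exact lt_add_one _))
  obtain ⟨a, hao, hasub⟩ := exists_lb_of_nhds hfV (show Order.IsSuccLimit d.1 from holim)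
  set ww : Ordinal := if w.1 = omega0 ^ α then 0 else w.1 with hww
  have hwwo : ww < omega0 ^ α := by
    rw [hww]
    split
    · exact opow_pos _ omega0_pos
    · exact lt_of_le_of_ne w.2 (by assumption)
  set z := max (max a y.1) ww with hz
  have hzo : z < omega0 ^ α := max_lt (max_lt hao hyo) hwwo
  set C : Set (Set.Iic (omega0 ^ α)) := Subtype.val ⁻¹' Set.Iic z with hC
  set T : Set (Set.Iic (omega0 ^ α)) := Subtype.val ⁻¹' Set.Ioi z with hT
  have hCclosed : IsClosed C := isClosed_Iic.preimage continuous_subtype_val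
  have hTopen : IsOpen T := isOpen_Ioi.preimage continuous_subtype_val
  have hfT : ∀ v ∈ T, f v ∈ C := by
    intro v hv
    have hzv : z < v.1 := hv
    have hfvC : v ∈ f ⁻¹' (Subtype.val ⁻¹' Set.Iio (y.1 + 1)) → f v ∈ C := by
      intro h
      have h1 : (f v).1 < y.1 + 1 := h
      have h2 : (f v).1 ≤ y.1 := Order.lt_add_one_iff.1 h1
      exact h2.trans ((le_max_right a y.1).trans (le_max_left _ ww))
    rcases eq_or_lt_of_le (Set.mem_Iic.1 v.2) with hv2 | hv2
    · have hvd : v = d := Subtype.ext hv2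
      rw [hvd]
      have : y.1 ≤ z := (le_max_right a y.1).trans (le_max_left _ ww)
      exact this
    · exact hfvC (hasub v (((le_max_left a y.1).trans (le_max_left _ ww)).trans_lt hzv) hv2)
  have horb : T ∩ Set.range (fun n : ℕ => f^[n] w) ⊆ f '' C ∪ {w} := by
    rintro p ⟨hpT, n, rfl⟩
    cases n with
    | zero => exact Or.inr rfl
    | succ m =>
      by_cases hq : f^[m] w ∈ C
      · exact Or.inl ⟨_, hq, (Function.iterate_succ_apply' f m w).symm⟩
      · exfalso
        have hqT : f^[m] w ∈ T := by
          have : ¬ (f^[m] w).1 ≤ z := fun hle => hq (Set.mem_preimage.2 (Set.mem_Iic.2 hle))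
          exact Set.mem_preimage.2 (Set.mem_Ioi.2 (not_le.1 this))
        have hfC : f (f^[m] w) ∈ C := hfT _ hqT
        have heq : (fun n => f^[n] w) (m+1) = f (f^[m] w) := Function.iterate_succ_apply' f m w
        rw [heq] at hpT
        exact absurd (Set.mem_Ioi.1 (Set.mem_preimage.1 hpT))
          (not_lt.2 (Set.mem_Iic.1 (Set.mem_preimage.1 hfC)))
  have hTsub : T ⊆ f '' C ∪ {w} := by
    have h1 : T ⊆ closure (T ∩ Set.range fun n : ℕ => f^[n] w) :=
      hw.open_subset_closure_inter hTopen
    have hcl : IsClosed (f '' C ∪ {w}) :=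
      ((hCclosed.isCompact.image hf).isClosed).union isClosed_singleton
    exact fun x hx => hcl.closure_subset ((closure_mono horb) (h1 hx))
  have hS0 : {v : Set.Iic (omega0 ^ α) | z < v.1 ∧ v.1 < omega0 ^ α} ⊆ f '' C := by
    rintro v ⟨h1, h2⟩
    rcases hTsub h1 with h | h
    · exact h
    · exfalso
      rw [Set.mem_singleton_iff] at h
      by_cases hwtop : w.1 = omega0 ^ α
      · rw [h] at h2
        exact absurd hwtop h2.ne
      · have : ww = w.1 := if_neg hwtop
        have hwz : w.1 ≤ z := this ▸ le_max_right (max a y.1) ww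
        rw [h] at h1
        exact absurd h1 (not_lt.2 hwz)
  -- for each γ < α, produce a point of C ∩ f⁻¹{d} ∩ derivedSet (cbIter C γ)
  have hfam : ∀ γ : {γ : Ordinal // γ < α},
      (C ∩ f ⁻¹' {d} ∩ derivedSet (cbIter C γ.1)).Nonempty := by
    rintro ⟨γ, hγ⟩
    have hdacc : d ∈ derivedSet
        {v : Set.Iic (omega0 ^ α) | z < v.1 ∧ v.1 < omega0 ^ α ∧ omega0 ^ γ ∣ v.1} := by
      rw [mem_derivedSet]
      apply accPt_of_cofinal (show 0 < d.1 from holim.pos)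
      intro a' ha'
      have hdvd : omega0 ^ (γ + 1) ∣ omega0 ^ α := opow_dvd_opow _ (by
        rw [Ordinal.add_one_eq_succ]; exact Order.succ_le_iff.2 hγ)
      obtain ⟨s, hs1, hs2, hs3⟩ := exists_mult_between (b := max a' z) (max_lt ha' hzo) hdvd
      exact ⟨⟨s, hs3.le⟩, ⟨(le_max_right _ _).trans_lt hs2, hs3, hs1⟩,
        (le_max_left _ _).trans_lt hs2, hs3⟩
    have hchain : d ∈ derivedSet (f '' cbIter C γ) := by
      refine derivedSet_mono _ _ (cbIter_image_subset hf hCclosed γ)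
        (derivedSet_mono _ _ (cbIter_mono hS0 γ)
          (derivedSet_mono _ _ (M_subset_cbIter (omega0 ^ α) z γ) hdacc))
    obtain ⟨k, hk1, hk2, hk3⟩ := exists_accPt_preimage hf
      (isClosed_cbIter hCclosed γ).isCompact hchain
    exact ⟨k, ⟨⟨cbIter_subset_self hk1, hk3⟩, hk2⟩⟩
  have hne' : Nonempty {γ : Ordinal // γ < α} := ⟨⟨0, hαpos⟩⟩
  obtain ⟨k, hk⟩ := IsCompact.nonempty_iInter_of_directed_nonempty_isCompact_isClosed
    (fun γ : {γ : Ordinal // γ < α} => C ∩ f ⁻¹' {d} ∩ derivedSet (cbIter C γ.1))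
    (by
      rintro γ δ
      rcases le_total γ.1 δ.1 with h | h
      · exact ⟨δ, fun y hy => ⟨hy.1, derivedSet_mono _ _ (cbIter_anti h) hy.2⟩,
          fun y hy => hy⟩
      · exact ⟨γ, fun y hy => hy,
          fun y hy => ⟨hy.1, derivedSet_mono _ _ (cbIter_anti h) hy.2⟩⟩)
    hfam
    (fun γ => (((hCclosed.inter (isClosed_singleton.preimage hf)).inter
      (isClosed_derivedSet _))).isCompact)
    (fun γ => ((hCclosed.inter (isClosed_singleton.preimage hf)).inter
      (isClosed_derivedSet _)))
  simp only [Set.mem_iInter, Set.mem_inter_iff, Set.mem_preimage,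
    Set.mem_singleton_iff, Subtype.forall] at hk
  have hkC : k ∈ C := (hk 0 hαpos).1.1
  have hkd : f k = d := (hk 0 hαpos).1.2
  have hkcb : k ∈ cbIter C α := mem_cbIter.2 ⟨hkC, fun γ hγ => (hk γ hγ).2⟩
  have hdvd : omega0 ^ α ∣ k.1 := dvd_of_mem_cbIter C α k hkcb
  have hk0 : k.1 = 0 := by
    by_contra h
    exact absurd (Ordinal.le_of_dvd h hdvd)
      (not_le_of_gt (lt_of_le_of_lt (show k.1 ≤ z from hkC) hzo))
  have hacc := (hk 0 hαpos).2
  rw [mem_derivedSet, accPt_iff_nhds] at hacc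
  obtain ⟨p, ⟨hpU, _⟩, hpk⟩ := hacc (Subtype.val ⁻¹' Set.Iio 1)
    ((isOpen_Iio.preimage continuous_subtype_val).mem_nhds
      (by simp only [Set.mem_preimage, Set.mem_Iio, hk0]; exact zero_lt_one))
  refine hpk (Subtype.ext ?_)
  have hp1 : p.1 < 1 := hpU
  rw [Ordinal.lt_one_iff_zero.1 hp1, hk0]
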